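/- For any υ > 0 there exist positive constants c₁ = c₁(υ) and c₂ = c₂(υ) such that for all t ≥ υ, c₁ e^{−λt} ≤ sup_{x≥0} |φ_t(x) − ϖ₊| ≤ c₂ e^{−λt}. In particular, for t ≥ υ and all x ≥ 0, if x > ϖ₊ then (φ_t(x) − ϖ₊)/(ϖ₊ − ϖ₋) ≤ e^{−λt}/(1 − e^{−λυ}), while φ_t(x) ≤ ϖ₊ whenever x ≤ ϖ₊. -/

import Mathlib

noncomputable def lam (A R S : ℝ) : ℝ := 2 * Real.sqrt (A ^ 2 + R * S)

noncomputable def wplus (A R S : ℝ) : ℝ := (A + lam A R S / 2) / S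

noncomputable def wminus (A R S : ℝ) : ℝ := (A - lam A R S / 2) / S

/-- The closed-form Riccati semigroup `φ_t(x)`. -/
noncomputable def phi (A R S t x : ℝ) : ℝ :=
  wplus A R S +
    (x - wplus A R S) * ((wplus A R S - wminus A R S) * Real.exp (-(lam A R S) * t)) /
      ((wplus A R S - wminus A R S) * Real.exp (-(lam A R S) * t) +
        (x - wminus A R S) * (1 - Real.exp (-(lam A R S) * t)))

/-- `ϖ = 1 - ϖ₊/ϖ₋`. -/
noncomputable def vpi (A R S : ℝ) : ℝ := 1 - wplus A R S / wminus A R S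

/-!
Write `q = e^{-λt}`, `p = ϖ₊`, `m = ϖ₋`. Then `φ_t(x) - p = (x - p)(p - m)q / D` where
`D = (p - m)q + (x - m)(1 - q)` is a convex combination of `p - m` and `x - m`. For `x ≥ 0`
both are at least `-m > 0`, so `|φ_t(x) - p| = O(q)`, while at `x = 0` we have `D ≤ p - m`,
whence `|φ_t(0) - p| ≥ p q`.
-/

open Real

def flowDen (p m q x : ℝ) : ℝ := (p - m) * q + (x - m) * (1 - q)

noncomputable def flowMap (p m q x : ℝ) : ℝ := p + (x - p) * ((p - m) * q) / flowDen p m q x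

theorem phi_eq_flowMap (A R S t x : ℝ) :
    phi A R S t x = flowMap (wplus A R S) (wminus A R S) (exp (-(lam A R S) * t)) x := rfl

section flowMap

variable {p m q x : ℝ}

theorem flowMap_sub (p m q x : ℝ) :
    flowMap p m q x - p = (x - p) * ((p - m) * q) / flowDen p m q x :=
  add_sub_cancel_left _ _

theorem neg_le_flowDen (hp : 0 ≤ p) (hx : 0 ≤ x) (hq₀ : 0 ≤ q) (hq₁ : q ≤ 1) :
    -m ≤ flowDen p m q x := by
  unfold flowDen; nlinarith

theorem flowDen_zero_le (hp : 0 ≤ p) (hq₁ : q ≤ 1) :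
    flowDen p m q 0 ≤ p - m := by
  unfold flowDen; nlinarith

theorem mul_le_flowDen (hmp : m ≤ p) (hq₀ : 0 ≤ q) :
    (x - m) * (1 - q) ≤ flowDen p m q x := by
  unfold flowDen; nlinarith

theorem flowMap_le_of_le (hm : m ≤ 0) (hp : 0 ≤ p) (hx₀ : 0 ≤ x) (hq₀ : 0 ≤ q) (hq₁ : q ≤ 1)
    (hxp : x ≤ p) : flowMap p m q x ≤ p := by
  have hD := (neg_le_flowDen hp hx₀ hq₀ hq₁ (m := m)).trans' (neg_nonneg.2 hm)
  have : flowMap p m q x - p ≤ 0 := by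
    rw [flowMap_sub]
    exact div_nonpos_of_nonpos_of_nonneg
      (mul_nonpos_of_nonpos_of_nonneg (sub_nonpos.2 hxp) (mul_nonneg (by linarith) hq₀)) hD
  linarith

theorem sub_flowMap_le (hm : m < 0) (hp : 0 ≤ p) (hx₀ : 0 ≤ x) (hq₀ : 0 ≤ q) (hq₁ : q ≤ 1) :
    p - flowMap p m q x ≤ (p - m) * (p / -m) * q := by
  have hD := neg_le_flowDen hp hx₀ hq₀ hq₁ (m := m)
  have hdq : 0 ≤ (p - m) * q := mul_nonneg (by linarith) hq₀
  calc p - flowMap p m q x = (p - x) * ((p - m) * q) / flowDen p m q x := by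
        rw [← neg_sub, flowMap_sub, ← neg_div, ← neg_mul, neg_sub]
    _ ≤ p * ((p - m) * q) / -m :=
        div_le_div₀ (mul_nonneg hp hdq) (by nlinarith) (by linarith) hD
    _ = (p - m) * (p / -m) * q := by ring

theorem flowMap_sub_div_le (hmp : m < p) (hq₀ : 0 ≤ q) {q₀ : ℝ} (hqq₀ : q ≤ q₀)
    (hq₀₁ : q₀ < 1) (hpx : p < x) :
    (flowMap p m q x - p) / (p - m) ≤ q / (1 - q₀) := by
  have hxm : 0 < x - m := by linarith
  have hD : (x - m) * (1 - q₀) ≤ flowDen p m q x :=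
    (mul_le_mul_of_nonneg_left (by linarith) hxm.le).trans (mul_le_flowDen (by linarith) hq₀)
  have hD₀ : 0 < (x - m) * (1 - q₀) := mul_pos hxm (by linarith)
  calc (flowMap p m q x - p) / (p - m) = (x - p) * q / flowDen p m q x := by
        rw [flowMap_sub, div_div, show (x - p) * ((p - m) * q) = (p - m) * ((x - p) * q) by ring,
          mul_comm _ (p - m), mul_div_mul_left _ _ (by linarith)]
    _ ≤ (x - m) * q / ((x - m) * (1 - q₀)) :=
        div_le_div₀ (mul_nonneg hxm.le hq₀) (by nlinarith) hD₀ hD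
    _ = q / (1 - q₀) := mul_div_mul_left _ _ hxm.ne'

theorem abs_flowMap_sub_le (hm : m < 0) (hp : 0 ≤ p) (hx : 0 ≤ x) (hq₀ : 0 ≤ q) {q₀ : ℝ}
    (hqq₀ : q ≤ q₀) (hq₀₁ : q₀ < 1) :
    |flowMap p m q x - p| ≤ (p - m) * (1 / (1 - q₀) + p / -m) * q := by
  have hq₁ : q ≤ 1 := hqq₀.trans hq₀₁.le
  have hsplit : (p - m) * (1 / (1 - q₀) + p / -m) * q =
      q / (1 - q₀) * (p - m) + (p - m) * (p / -m) * q := by ring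
  have hfar : 0 ≤ q / (1 - q₀) * (p - m) :=
    mul_nonneg (div_nonneg hq₀ (by linarith)) (by linarith)
  have hnear : 0 ≤ (p - m) * (p / -m) * q :=
    mul_nonneg (mul_nonneg (by linarith) (div_nonneg hp (by linarith))) hq₀
  rcases le_or_gt x p with hxp | hpx
  · rw [abs_of_nonpos (by linarith [flowMap_le_of_le hm.le hp hx hq₀ hq₁ hxp])]
    linarith [sub_flowMap_le hm hp hx hq₀ hq₁]
  · have hfar_le := flowMap_sub_div_le (hm.trans_le hp) hq₀ hqq₀ hq₀₁ hpx
    rw [div_le_iff₀ (by linarith)] at hfar_le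
    have hpos : 0 ≤ flowMap p m q x - p := by
      rw [flowMap_sub]
      exact div_nonneg (mul_nonneg (by linarith) (mul_nonneg (by linarith) hq₀))
        (by linarith [neg_le_flowDen hp hx hq₀ hq₁ (m := m)])
    rw [abs_of_nonneg hpos]
    linarith

theorem mul_le_abs_flowMap_zero_sub (hm : m < 0) (hp : 0 ≤ p) (hq₀ : 0 ≤ q) (hq₁ : q ≤ 1) :
    p * q ≤ |flowMap p m q 0 - p| := by
  have hD := neg_le_flowDen hp le_rfl hq₀ hq₁ (m := m)
  have hD' := flowDen_zero_le hp hq₁ (m := m)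
  have hdq : 0 ≤ (p - m) * q := mul_nonneg (by linarith) hq₀
  rw [flowMap_sub, abs_div, abs_mul, zero_sub, abs_neg, abs_of_nonneg hp, abs_of_nonneg hdq,
    abs_of_pos (by linarith), le_div_iff₀ (by linarith)]
  nlinarith [mul_nonneg hp hq₀]

end flowMap

theorem le_sSup_and_sSup_le {α : Type*} {P : α → Prop} {f : α → ℝ} {a b : ℝ} {x₀ : α}
    (hx₀ : P x₀) (ha : a ≤ f x₀) (hb : ∀ x, P x → f x ≤ b) :
    a ≤ sSup {y | ∃ x, P x ∧ y = f x} ∧ sSup {y | ∃ x, P x ∧ y = f x} ≤ b := by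
  have hbdd : BddAbove {y | ∃ x, P x ∧ y = f x} := ⟨b, by rintro _ ⟨x, hx, rfl⟩; exact hb x hx⟩
  exact ⟨ha.trans (le_csSup hbdd ⟨x₀, hx₀, rfl⟩),
    csSup_le ⟨_, x₀, hx₀, rfl⟩ (by rintro _ ⟨x, hx, rfl⟩; exact hb x hx)⟩

section roots

variable {A R S : ℝ}

theorem lam_pos (hR : 0 < R) (hS : 0 < S) : 0 < lam A R S := by
  unfold lam; positivity

theorem abs_lt_half_lam (hR : 0 < R) (hS : 0 < S) : |A| < lam A R S / 2 := by
  rw [lam, mul_div_cancel_left₀ _ two_ne_zero, ← Real.sqrt_sq_eq_abs]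
  exact Real.sqrt_lt_sqrt (sq_nonneg _) (by nlinarith)

theorem wplus_pos (hR : 0 < R) (hS : 0 < S) : 0 < wplus A R S :=
  div_pos (by linarith [neg_abs_le A, abs_lt_half_lam (A := A) hR hS]) hS

theorem wminus_neg (hR : 0 < R) (hS : 0 < S) : wminus A R S < 0 :=
  div_neg_of_neg_of_pos (by linarith [le_abs_self A, abs_lt_half_lam (A := A) hR hS]) hS

end roots

theorem riccati_flow_exponential_decay (A R S : ℝ) (hR : 0 < R) (hS : 0 < S)
    (υ : ℝ) (hυ : 0 < υ) :
    (∃ c₁ > (0 : ℝ), ∃ c₂ > (0 : ℝ), ∀ t : ℝ, υ ≤ t →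
        c₁ * Real.exp (-(lam A R S) * t) ≤
            sSup {y : ℝ | ∃ x : ℝ, 0 ≤ x ∧ y = |phi A R S t x - wplus A R S|} ∧
          sSup {y : ℝ | ∃ x : ℝ, 0 ≤ x ∧ y = |phi A R S t x - wplus A R S|} ≤
            c₂ * Real.exp (-(lam A R S) * t)) ∧
      ∀ t : ℝ, υ ≤ t → ∀ x : ℝ, 0 ≤ x →
        (wplus A R S < x →
            (phi A R S t x - wplus A R S) / (wplus A R S - wminus A R S) ≤
              Real.exp (-(lam A R S) * t) / (1 - Real.exp (-(lam A R S) * υ))) ∧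
          (x ≤ wplus A R S → phi A R S t x ≤ wplus A R S) := by
  have hp := wplus_pos (A := A) hR hS
  have hm := wminus_neg (A := A) hR hS
  have hlam := lam_pos (A := A) hR hS
  have hq₀₁ : exp (-(lam A R S) * υ) < 1 := exp_lt_one_iff.2 (by nlinarith)
  have hq : ∀ t, υ ≤ t → exp (-(lam A R S) * t) ≤ exp (-(lam A R S) * υ) := fun t ht =>
    exp_le_exp.2 (by nlinarith)
  simp only [phi_eq_flowMap]
  have hc₂ : 0 < (wplus A R S - wminus A R S) *
      (1 / (1 - exp (-(lam A R S) * υ)) + wplus A R S / -wminus A R S) :=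
    mul_pos (by linarith) (add_pos (one_div_pos.2 (by linarith)) (div_pos hp (by linarith)))
  refine ⟨⟨_, hp, _, hc₂, fun t ht => ?_⟩, fun t ht x hx => ⟨?_, ?_⟩⟩
  · exact le_sSup_and_sSup_le le_rfl
      (mul_le_abs_flowMap_zero_sub hm hp.le (exp_pos _).le ((hq t ht).trans hq₀₁.le))
      fun x hx => abs_flowMap_sub_le hm hp.le hx (exp_pos _).le (hq t ht) hq₀₁
  · exact flowMap_sub_div_le (hm.trans hp) (exp_pos _).le (hq t ht) hq₀₁
  · exact flowMap_le_of_le hm.le hp.le hx (exp_pos _).le ((hq t ht).trans hq₀₁.le)
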